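/- arXiv:0706.3327 — 2 statements merged into one kernel-verified Lean document; each statement's English description precedes it below -/
import Mathlib

section
/- Construction of the reflection algebra representation: let H be a finite-dimensional ℤ₂-graded complex vector space, D ⊆ ℂ a symmetric subset (u ∈ D ⇒ −u ∈ D), and T : D → End(V⊗H) a function such that every T(u) is an even invertible operator and the RTT relation R₁₂(u−v)∘T₁(u)∘T₂(v) = T₂(v)∘T₁(u)∘R₁₂(u−v) holds in End(V⊗V⊗H) for all u,v ∈ D, where T₂(u) = id_V⊗T(u), T₁(u) = (P⊗id_H)∘(id_V⊗T(u))∘(P⊗id_H), and R₁₂(x) = R(x)⊗id_H. Let K : ℂ → Mat_n(ℂ) be parity-preserving (K_{ij}(u) = 0 whenever [i] ≠ [j]) and satisfy the graded reflection equation. Then B(u) := T(u)∘(K(u)⊗id_H)∘T(−u)⁻¹ satisfies the graded reflection equation with operator entries: R₁₂(u−v)B₁(u)R₂₁(u+v)B₂(v) = B₂(v)R₁₂(u+v)B₁(u)R₂₁(u−v) in End(V⊗V⊗H), for all u, v ∈ D with (u+v)² ≠ ħ² and (u−v)² ≠ ħ², where B₁, B₂ are embedded like T₁, T₂ and R₂₁(x)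 = (P⊗id_H)∘R₁₂(x)∘(P⊗id_H). -/
open scoped BigOperators

noncomputable section

namespace SuperSpin

/-- The ℤ₂-grading on `Fin n` (0-indexed): grade `0` for the first `M` indices,
grade `1` for the remaining ones.  `gr M i` is the grade of the (paper, 1-indexed)
index `i+1`. -/
def gr (M : ℕ) {n : ℕ} (i : Fin n) : ℕ := if (i : ℕ) < M then 0 else 1

/-- `End(V ⊗ V)` for `V = ℂⁿ`, as matrices indexed by pairs. -/
abbrev E2 (n : ℕ) := Matrix (Fin n × Fin n) (Fin n × Fin n) ℂ

/-- The graded permutation operator `P (e_c ⊗ e_d) = (-1)^{[c][d]} e_d ⊗ e_c`. -/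
def Pm (M n : ℕ) : E2 n :=
  Matrix.of fun p q =>
    if p.1 = q.2 ∧ p.2 = q.1 then ((-1 : ℂ) ^ (gr M q.1 * gr M q.2)) else 0

/-- The R-matrix `R(u) = u·id - hb·P`. -/
def Rm (M n : ℕ) (hb u : ℂ) : E2 n := u • (1 : E2 n) - hb • Pm M n

/-- The operator `Q (e_c ⊗ e_d) = δ_{cd} (-1)^{[d]} ∑_a e_a ⊗ e_a`. -/
def Qm (M n : ℕ) : E2 n :=
  Matrix.of fun p q => if q.1 = q.2 ∧ p.1 = p.2 then ((-1 : ℂ) ^ (gr M q.2)) else 0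

/-- Graded partial transposition in the second tensor factor. -/
def pt2 (M n : ℕ) (X : E2 n) : E2 n :=
  Matrix.of fun p q =>
    ((-1 : ℂ) ^ (gr M p.2 * gr M q.2 + gr M q.2)) * X (p.1, q.2) (q.1, p.2)

/-- Graded transposition of an `n × n` matrix: `(Aᵗ)_{ij} = (-1)^{[i][j]+[j]} A_{ji}`. -/
def gTr (M : ℕ) {n : ℕ} (A : Matrix (Fin n) (Fin n) ℂ) : Matrix (Fin n) (Fin n) ℂ :=
  Matrix.of fun i j => ((-1 : ℂ) ^ (gr M i * gr M j + gr M j)) * A j i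

/-- `A ⊗ id` acting on `V ⊗ V`. -/
def m1 {n : ℕ} (A : Matrix (Fin n) (Fin n) ℂ) : E2 n :=
  Matrix.of fun p q => A p.1 q.1 * (if p.2 = q.2 then 1 else 0)

/-- `id ⊗ A` acting on `V ⊗ V`. -/
def m2 {n : ℕ} (A : Matrix (Fin n) (Fin n) ℂ) : E2 n :=
  Matrix.of fun p q => (if p.1 = q.1 then 1 else 0) * A p.2 q.2

/-- `R₂₁(x) = P ∘ R(x) ∘ P`. -/
def R21 (M n : ℕ) (hb u : ℂ) : E2 n := Pm M n * Rm M n hb u * Pm M n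

/-- The graded reflection equation for a matrix-valued function `K`. -/
def GRE (M n : ℕ) (hb : ℂ) (K : ℂ → Matrix (Fin n) (Fin n) ℂ) : Prop :=
  ∀ u v : ℂ,
    Rm M n hb (u - v) * m1 (K u) * R21 M n hb (u + v) * m2 (K v)
      = m2 (K v) * Rm M n hb (u + v) * m1 (K u) * R21 M n hb (u - v)

/-- `End(V^{⊗m})`, with basis indexed by functions `Fin m → Fin n`. -/
abbrev Ten (n m : ℕ) := Matrix (Fin m → Fin n) (Fin m → Fin n) ℂ

/-- The Koszul embedding of `X ∈ End(V ⊗ V)` acting on the factors `i < j` of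
`V^{⊗ m}` (identity on the other factors, with the graded crossing signs produced
by conjugation with the adjacent graded permutation operators). -/
def kEmb (M n m : ℕ) (i j : Fin m) (X : E2 n) : Ten n m :=
  Matrix.of fun f g =>
    (if ∀ l, l ≠ i → l ≠ j → f l = g l then (1 : ℂ) else 0)
      * X (f i, f j) (g i, g j)
      * (-1 : ℂ) ^ ((gr M (f j) + gr M (g j)) *
          ∑ l ∈ Finset.univ.filter (fun l => i < l ∧ l < j), gr M (g l))

/-- The monodromy matrix `𝒯(u) = R_{1,2}(u-a₁) ⋯ R_{1,L+1}(u-a_L)` of the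
inhomogeneous fundamental chain, acting on `V ⊗ H = V^{⊗(L+1)}` (auxiliary space
in position `0`). -/
def Tmono (M n L : ℕ) (hb : ℂ) (a : Fin L → ℂ) (u : ℂ) : Ten n (L + 1) :=
  (List.ofFn fun k : Fin L => kEmb M n (L + 1) 0 k.succ (Rm M n hb (u - a k))).prod

/-- The block entry `X_{ab} ∈ End(H)` of an operator `X` on `V ⊗ H`. -/
def blk {n L : ℕ} (X : Ten n (L + 1)) (a b : Fin n) : Ten n L :=
  Matrix.of fun f g => X (Fin.cons a f) (Fin.cons b g)

/-- Supertrace transfer matrix `st(u) = ∑ (-1)^{[a]} 𝒯_{aa}(u)`. -/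
def stm (M n L : ℕ) (hb : ℂ) (a : Fin L → ℂ) (u : ℂ) : Ten n L :=
  ∑ i : Fin n, ((-1 : ℂ) ^ gr M i) • blk (Tmono M n L hb a u) i i

/-- Trace transfer matrix `t(u) = ∑ 𝒯_{aa}(u)`. -/
def tm (M n L : ℕ) (hb : ℂ) (a : Fin L → ℂ) (u : ℂ) : Ten n L :=
  ∑ i : Fin n, blk (Tmono M n L hb a u) i i

/-- The pseudovacuum `v⁺ = e₁ ⊗ ⋯ ⊗ e₁`. -/
def vplus (n L : ℕ) : (Fin L → Fin n) → ℂ :=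
  fun f => if ∀ l, (f l : ℕ) = 0 then 1 else 0

/-- The pseudovacuum weights `λ_j(w)` (paper index `j ≥ 1`):
`λ₁(w) = ∏ (w - a_m - hb)`, `λ_j(w) = ∏ (w - a_m)` for `j ≥ 2`. -/
def lamP (L : ℕ) (hb : ℂ) (a : Fin L → ℂ) (j : ℕ) (w : ℂ) : ℂ :=
  if j = 1 then ∏ m, (w - a m - hb) else ∏ m, (w - a m)

/-- `c_m = ∑_{l=1}^m (-1)^{[l]}` (so `c_0 = 0`). -/
def cP (M : ℕ) (m : ℕ) : ℂ := ∑ l ∈ Finset.range m, (if l < M then (1 : ℂ) else -1)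

/-- `λ'_k(w) = ∏_{m=1}^{k-1} λ_m(w + hb c_m) / ∏_{m=1}^{k} λ_m(w + hb c_{m-1})`
(paper index `k ≥ 1`). -/
def lamPr (M L : ℕ) (hb : ℂ) (a : Fin L → ℂ) (k : ℕ) (w : ℂ) : ℂ :=
  (∏ m ∈ Finset.Icc 1 (k - 1), lamP L hb a m (w + hb * cP M m)) /
    (∏ m ∈ Finset.Icc 1 k, lamP L hb a m (w + hb * cP M (m - 1)))

/-- The global generators `Δ(E_{ab}) = ∑_k E_{ab}^{(k)}` on `H = V^{⊗L}`. -/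
def Delta (M n L : ℕ) (a b : Fin n) : Ten n L :=
  ∑ k : Fin L, Matrix.of fun f g =>
    if f k = a ∧ g k = b ∧ ∀ l, l ≠ k → f l = g l then
      (-1 : ℂ) ^ ((gr M a + gr M b) *
        ∑ l ∈ Finset.univ.filter (fun l => l < k), gr M (g l))
    else 0

/-- The diagonal entry (at paper index `j`, `1 ≤ j ≤ n`) of the diagonal boundary
matrix with parameter `ξ` and blocks determined by `L₁ ≤ L₂`. -/
def kdval (ξ : ℂ) (L₁ L₂ : ℕ) (j : ℕ) (u : ℂ) : ℂ :=
  if L₁ < j ∧ j ≤ L₂ then u + ξ else ξ - u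

/-- The diagonal boundary matrix `K(u)`. -/
def Kdiag (n : ℕ) (ξ : ℂ) (L₁ L₂ : ℕ) (u : ℂ) : Matrix (Fin n) (Fin n) ℂ :=
  Matrix.diagonal fun j => kdval ξ L₁ L₂ ((j : ℕ) + 1) u

/-- An `n × n` matrix acting on the auxiliary (first) factor of `V^{⊗(L+1)}`. -/
def onAux {n L : ℕ} (A : Matrix (Fin n) (Fin n) ℂ) : Ten n (L + 1) :=
  Matrix.of fun f g => A (f 0) (g 0) * (if ∀ l, l ≠ 0 → f l = g l then 1 else 0)

/-- The double-row monodromy matrix `ℬ(u) = 𝒯(u) (K(u) ⊗ id_H) 𝒯(-u)⁻¹`. -/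
def Bmono (M n L : ℕ) (hb : ℂ) (a : Fin L → ℂ) (ξ : ℂ) (L₁ L₂ : ℕ) (u : ℂ) :
    Ten n (L + 1) :=
  Tmono M n L hb a u * onAux (Kdiag n ξ L₁ L₂ u) * (Tmono M n L hb a (-u))⁻¹

/-- The open-chain transfer matrix `b(u) = ∑ (-1)^{[a]} K⁺_{aa}(u) ℬ_{aa}(u)`. -/
def bop (M n L : ℕ) (hb : ℂ) (a : Fin L → ℂ) (ξ : ℂ) (L₁ L₂ : ℕ)
    (ξ' : ℂ) (L₁' L₂' : ℕ) (u : ℂ) : Ten n L :=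
  ∑ i : Fin n,
    (((-1 : ℂ) ^ gr M i) * Kdiag n ξ' L₁' L₂' u i i) •
      blk (Bmono M n L hb a ξ L₁ L₂ u) i i

/-- The functions `g_k(u)` of the open-chain pseudovacuum (paper index `k ≥ 1`). -/
def gP (M : ℕ) (hb ξ : ℂ) (L₁ L₂ : ℕ) (k : ℕ) (u : ℂ) : ℂ :=
  if k ≤ L₁ then ξ - u
  else if k ≤ L₂ then ξ + u - hb * cP M L₁
  else ξ - u - hb * (cP M L₁ - cP M L₂)

/-- The functions `a_k(u)` of the open-chain pseudovacuum (paper index `k ≥ 1`). -/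
def aP (M L : ℕ) (hb : ℂ) (a : Fin L → ℂ) (k : ℕ) (u : ℂ) : ℂ :=
  (if k ≤ M then (1 : ℂ) else -1) * hb *
    (2 * u * lamP L hb a k u * lamPr M L hb a k (-u)) /
    ((2 * u - hb * cP M k) * (2 * u - hb * cP M (k - 1)))

/-- Operators on `V ⊗ H`, where `H` has homogeneous basis indexed by `ι`. -/
abbrev EVH (n : ℕ) (ι : Type) := Matrix (Fin n × ι) (Fin n × ι) ℂ

/-- Operators on `V ⊗ V ⊗ H`. -/
abbrev EVVH (n : ℕ) (ι : Type) := Matrix (Fin n × Fin n × ι) (Fin n × Fin n × ι) ℂ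

/-- `T₂ = id_V ⊗ T` for an (even) operator `T` on `V ⊗ H`. -/
def opT2 {n : ℕ} {ι : Type} [DecidableEq ι] (X : EVH n ι) : EVVH n ι :=
  Matrix.of fun p q => (if p.1 = q.1 then 1 else 0) * X (p.2.1, p.2.2) (q.2.1, q.2.2)

/-- `P ⊗ id_H` on `V ⊗ V ⊗ H`. -/
def P12H (M n : ℕ) (ι : Type) [DecidableEq ι] : EVVH n ι :=
  Matrix.of fun p q => Pm M n (p.1, p.2.1) (q.1, q.2.1) * (if p.2.2 = q.2.2 then 1 else 0)

/-- `T₁ = (P ⊗ id_H) ∘ (id_V ⊗ T) ∘ (P ⊗ id_H)`. -/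
def opT1 (M n : ℕ) {ι : Type} [Fintype ι] [DecidableEq ι] (X : EVH n ι) : EVVH n ι :=
  P12H M n ι * opT2 X * P12H M n ι

/-- `R₁₂(x) = R(x) ⊗ id_H` on `V ⊗ V ⊗ H`. -/
def R12H (M n : ℕ) (ι : Type) [DecidableEq ι] (hb x : ℂ) : EVVH n ι :=
  Matrix.of fun p q =>
    Rm M n hb x (p.1, p.2.1) (q.1, q.2.1) * (if p.2.2 = q.2.2 then 1 else 0)

/-- `R₂₁(x) = (P ⊗ id_H) ∘ R₁₂(x) ∘ (P ⊗ id_H)`. -/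
def R21H (M n : ℕ) (ι : Type) [Fintype ι] [DecidableEq ι] (hb x : ℂ) : EVVH n ι :=
  P12H M n ι * R12H M n ι hb x * P12H M n ι

/-- `K ⊗ id_H` on `V ⊗ H`. -/
def KH {n : ℕ} {ι : Type} [DecidableEq ι] (A : Matrix (Fin n) (Fin n) ℂ) : EVH n ι :=
  Matrix.of fun p q => A p.1 q.1 * (if p.2 = q.2 then 1 else 0)

/-- An operator on the graded space `V ⊗ H` is even when all its matrix entries
between components of different total parity vanish. -/
def IsEvenOp (M : ℕ) {n : ℕ} {ι : Type} (grH : ι → ℕ) (X : EVH n ι) : Prop :=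
  ∀ p q : Fin n × ι,
    (gr M p.1 + grH p.2) % 2 ≠ (gr M q.1 + grH q.2) % 2 → X p q = 0


/-!
Sklyanin's dressing argument. Write `B = T K S` with `S(u) = T(-u)⁻¹`. In
`R(u-v) B₁(u) R(u+v) B₂(v)` the factors are moved across each other using four relations:
the RTT relation at `(u, v)`, and the relations for `(S₁(u), T₂(v))`, `(S₂(v), T₁(u))` and
`(S₁(u), S₂(v))` obtained by inverting the RTT relation at `(-u, v)`, `(-v, u)`, `(-u, -v)`.
Inverting is possible because `R(x) R(-x) = (ħ² - x²)·1`. In between, `K₁(u)` and `K₂(v)`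
commute with the operators acting in the other auxiliary space (a parity-preserving `K`
satisfies `P K₂ P = K₁`), and the scalar reflection equation finishes the computation.
Since `P` commutes with `R`, `R₂₁ = R₁₂` throughout.
-/

section Monoid

variable {α : Type*} [Monoid α]

theorem mul_mul_swap_of_inverse {x x' y z : α} (h₁ : x' * x = 1) (h₂ : x * x' = 1)
    (h : x * y * z = z * y * x) : x' * z * y = y * z * x' :=
  calc x' * z * y = x' * (z * y * x) * x' := by simp only [mul_assoc, h₂, mul_one]
    _ = x' * (x * y * z) * x' := by rw [h]
    _ = y * z * x' := by simp only [← mul_assoc, h₁, one_mul]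

theorem reflection_dressing {a b t₁ t₂ s₁ s₂ k₁ k₂ : α}
    (h_tt : a * t₁ * t₂ = t₂ * t₁ * a) (h_st : s₁ * b * t₂ = t₂ * b * s₁)
    (h_ts : s₂ * b * t₁ = t₁ * b * s₂) (h_ss : a * s₁ * s₂ = s₂ * s₁ * a)
    (hk₁t₂ : Commute k₁ t₂) (hs₁k₂ : Commute s₁ k₂) (hk₂t₁ : Commute k₂ t₁)
    (hk₁s₂ : Commute k₁ s₂) (hk : a * k₁ * b * k₂ = k₂ * b * k₁ * a) :
    a * (t₁ * k₁ * s₁) * b * (t₂ * k₂ * s₂)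
      = t₂ * k₂ * s₂ * b * (t₁ * k₁ * s₁) * a :=
  calc a * (t₁ * k₁ * s₁) * b * (t₂ * k₂ * s₂)
      = a * t₁ * k₁ * (t₂ * b * s₁) * k₂ * s₂ := by rw [← h_st]; simp only [mul_assoc]
    _ = a * t₁ * (t₂ * k₁) * b * (k₂ * s₁) * s₂ := by
        rw [← hk₁t₂.eq, ← hs₁k₂.eq]; simp only [mul_assoc]
    _ = t₂ * t₁ * a * k₁ * b * k₂ * s₁ * s₂ := by rw [← h_tt]; simp only [mul_assoc]
    _ = t₂ * t₁ * (k₂ * b * k₁ * a) * s₁ * s₂ := by rw [← hk]; simp only [mul_assoc]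
    _ = t₂ * t₁ * k₂ * b * k₁ * (s₂ * s₁ * a) := by rw [← h_ss]; simp only [mul_assoc]
    _ = t₂ * (k₂ * t₁) * b * (s₂ * k₁) * s₁ * a := by
        rw [hk₂t₁.eq, ← hk₁s₂.eq]; simp only [mul_assoc]
    _ = t₂ * k₂ * (s₂ * b * t₁) * k₁ * s₁ * a := by rw [h_ts]; simp only [mul_assoc]
    _ = t₂ * k₂ * s₂ * b * (t₁ * k₁ * s₁) * a := by simp only [mul_assoc]

end Monoid

theorem mul_mul_swap_of_inverse_smul {K α : Type*} [Field K] [Ring α] [Algebra K α]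
    {x x' y z : α} {c : K} (hc : c ≠ 0) (h₁ : x' * x = c • 1) (h₂ : x * x' = c • 1)
    (h : x * y * z = z * y * x) : x' * z * y = y * z * x' := by
  have key := mul_mul_swap_of_inverse (x' := c⁻¹ • x') (y := y) (z := z)
    (by rw [smul_mul_assoc, h₁, smul_smul, inv_mul_cancel₀ hc, one_smul])
    (by rw [mul_smul_comm, h₂, smul_smul, inv_mul_cancel₀ hc, one_smul]) h
  simp only [smul_mul_assoc, mul_smul_comm] at key
  exact smul_right_injective α (inv_ne_zero hc) key

section RMatrix

variable {M n : ℕ}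

theorem Pm_mul_apply (Z : E2 n) (p q : Fin n × Fin n) :
    (Pm M n * Z) p q = (-1 : ℂ) ^ (gr M p.2 * gr M p.1) * Z (p.2, p.1) q := by
  rw [Matrix.mul_apply, Finset.sum_eq_single (p.2, p.1)]
  · simp [Pm]
  · rintro r - hr
    have : ¬(p.1 = r.2 ∧ p.2 = r.1) := fun h => hr (Prod.ext h.2.symm h.1.symm)
    simp [Pm, this]
  · simp

theorem mul_Pm_apply (Z : E2 n) (p q : Fin n × Fin n) :
    (Z * Pm M n) p q = Z p (q.2, q.1) * (-1 : ℂ) ^ (gr M q.1 * gr M q.2) := by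
  rw [Matrix.mul_apply, Finset.sum_eq_single (q.2, q.1)]
  · simp [Pm]
  · rintro r - hr
    have : ¬(r.1 = q.2 ∧ r.2 = q.1) := fun h => hr (Prod.ext h.1 h.2)
    simp [Pm, this]
  · simp

theorem neg_one_pow_mul_self (e : ℕ) : (-1 : ℂ) ^ e * (-1 : ℂ) ^ e = 1 :=
  pow_mul_pow_eq_one e (by norm_num)

theorem Pm_mul_self : Pm M n * Pm M n = 1 := by
  ext p q
  rw [Pm_mul_apply]
  by_cases h : p = q
  · subst h
    simp only [Pm, Matrix.of_apply, Matrix.one_apply_eq, and_self, if_true]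
    rw [mul_comm (gr M p.1), neg_one_pow_mul_self]
  · have : ¬(p.2 = q.2 ∧ p.1 = q.1) := fun h' => h (Prod.ext h'.2 h'.1)
    simp [Pm, this, Matrix.one_apply_ne h]

/-- The graded crossing signs cancel because `A` only connects indices of equal degree. -/
theorem Pm_mul_m2_mul_Pm {A : Matrix (Fin n) (Fin n) ℂ}
    (hA : ∀ i j : Fin n, gr M i ≠ gr M j → A i j = 0) :
    Pm M n * m2 A * Pm M n = m1 A := by
  ext p q
  rw [mul_Pm_apply, Pm_mul_apply]
  simp only [m1, m2, Matrix.of_apply]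
  by_cases h₂ : p.2 = q.2
  · by_cases hg : gr M p.1 = gr M q.1
    · rw [if_pos h₂, one_mul, mul_one, h₂, hg, mul_comm (gr M q.2), mul_right_comm,
        neg_one_pow_mul_self, one_mul]
    · simp [hA _ _ hg]
  · simp [h₂]

theorem Pm_mul_Rm_mul_Pm (hb x : ℂ) : Pm M n * Rm M n hb x * Pm M n = Rm M n hb x := by
  simp only [Rm, mul_sub, sub_mul, mul_smul_comm, smul_mul_assoc, mul_one, one_mul, Pm_mul_self]

theorem Rm_mul_Rm_neg (hb x : ℂ) :
    Rm M n hb x * Rm M n hb (-x) = (hb ^ 2 - x ^ 2) • (1 : E2 n) := by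
  simp only [Rm, sub_mul, mul_sub, smul_mul_assoc, mul_smul_comm, mul_one, one_mul,
    Pm_mul_self]
  module

end RMatrix

section Embeddings

open Kronecker

variable {M n : ℕ} {ι : Type} [DecidableEq ι]

def tensorId (ι : Type) [DecidableEq ι] (X : E2 n) : EVVH n ι :=
  (X ⊗ₖ (1 : Matrix ι ι ℂ)).submatrix (Equiv.prodAssoc (Fin n) (Fin n) ι).symm
    (Equiv.prodAssoc (Fin n) (Fin n) ι).symm

theorem tensorId_apply (X : E2 n) (p q : Fin n × Fin n × ι) :
    tensorId ι X p q = X (p.1, p.2.1) (q.1, q.2.1) * (if p.2.2 = q.2.2 then 1 else 0) := by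
  simp [tensorId, Matrix.one_apply]

theorem tensorId_one : tensorId ι (1 : E2 n) = 1 := by
  rw [tensorId, Matrix.one_kronecker_one, Matrix.submatrix_one_equiv]

theorem tensorId_smul (c : ℂ) (X : E2 n) : tensorId ι (c • X) = c • tensorId ι X := by
  rw [tensorId, tensorId, Matrix.smul_kronecker]
  rfl

theorem R12H_eq_tensorId (hb x : ℂ) : R12H M n ι hb x = tensorId ι (Rm M n hb x) := by
  ext p q
  rw [tensorId_apply]
  rfl

theorem P12H_eq_tensorId : P12H M n ι = tensorId ι (Pm M n) := by
  ext p q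
  rw [tensorId_apply]
  rfl

theorem opT2_eq_kronecker (X : EVH n ι) : opT2 X = (1 : Matrix (Fin n) (Fin n) ℂ) ⊗ₖ X := by
  ext p q
  simp [opT2, Matrix.one_apply]

theorem opT2_KH (A : Matrix (Fin n) (Fin n) ℂ) : opT2 (KH (ι := ι) A) = tensorId ι (m2 A) := by
  ext p q
  simp [opT2, KH, m2, tensorId_apply]

theorem tensorId_m1_eq_kronecker (A : Matrix (Fin n) (Fin n) ℂ) :
    tensorId ι (m1 A) = A ⊗ₖ (1 : EVH n ι) := by
  ext p q
  simp only [tensorId_apply, m1, Matrix.of_apply, Matrix.kroneckerMap_apply, Matrix.one_apply]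
  by_cases h₁ : p.2.1 = q.2.1 <;> by_cases h₂ : p.2.2 = q.2.2 <;> simp [Prod.ext_iff, h₁, h₂]

theorem opT2_one : opT2 (1 : EVH n ι) = 1 := by
  rw [opT2_eq_kronecker, Matrix.one_kronecker_one]

variable [Fintype ι]

theorem tensorId_mul (X Y : E2 n) : tensorId ι (X * Y) = tensorId ι X * tensorId ι Y := by
  rw [tensorId, tensorId, tensorId, Matrix.submatrix_mul_equiv, ← Matrix.mul_kronecker_mul,
    one_mul]

theorem opT2_mul (X Y : EVH n ι) : opT2 (X * Y) = opT2 X * opT2 Y := by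
  rw [opT2_eq_kronecker, opT2_eq_kronecker, opT2_eq_kronecker, ← Matrix.mul_kronecker_mul,
    one_mul]

theorem commute_tensorId_m1_opT2 (A : Matrix (Fin n) (Fin n) ℂ) (X : EVH n ι) :
    Commute (tensorId ι (m1 A)) (opT2 X) := by
  rw [Commute, SemiconjBy, tensorId_m1_eq_kronecker, opT2_eq_kronecker,
    ← Matrix.mul_kronecker_mul, ← Matrix.mul_kronecker_mul, mul_one, one_mul, mul_one, one_mul]

theorem P12H_mul_self : P12H M n ι * P12H M n ι = 1 := by
  rw [P12H_eq_tensorId, ← tensorId_mul, Pm_mul_self, tensorId_one]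

theorem P12H_conj_mul_conj {A B : EVVH n ι} :
    P12H M n ι * A * P12H M n ι * (P12H M n ι * B * P12H M n ι)
      = P12H M n ι * (A * B) * P12H M n ι := by
  simp only [mul_assoc]
  rw [← mul_assoc (P12H M n ι) (P12H M n ι), P12H_mul_self, one_mul]

theorem commute_P12H_conj {A B : EVVH n ι} (h : Commute A B) :
    Commute (P12H M n ι * A * P12H M n ι) (P12H M n ι * B * P12H M n ι) := by
  rw [Commute, SemiconjBy, P12H_conj_mul_conj, P12H_conj_mul_conj, h.eq]

theorem opT1_mul (X Y : EVH n ι) : opT1 M n (X * Y) = opT1 M n X * opT1 M n Y := by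
  rw [opT1, opT1, opT1, opT2_mul, P12H_conj_mul_conj]

theorem opT1_one : opT1 M n (1 : EVH n ι) = 1 := by
  rw [opT1, opT2_one, mul_one, P12H_mul_self]

theorem P12H_conj_opT2 (X : EVH n ι) : P12H M n ι * opT2 X * P12H M n ι = opT1 M n X :=
  rfl

theorem P12H_conj_opT1 (X : EVH n ι) :
    P12H M n ι * opT1 M n X * P12H M n ι = opT2 X := by
  simp only [opT1, ← mul_assoc, P12H_mul_self, one_mul]
  rw [mul_assoc, P12H_mul_self, mul_one]

theorem R21H_eq_R12H (hb x : ℂ) : R21H M n ι hb x = R12H M n ι hb x := by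
  rw [R21H, P12H_eq_tensorId, R12H_eq_tensorId, ← tensorId_mul, ← tensorId_mul,
    Pm_mul_Rm_mul_Pm]

theorem P12H_conj_R12H (hb x : ℂ) :
    P12H M n ι * R12H M n ι hb x * P12H M n ι = R12H M n ι hb x :=
  R21H_eq_R12H hb x

theorem R12H_mul_R12H_neg (hb x : ℂ) :
    R12H M n ι hb x * R12H M n ι hb (-x) = (hb ^ 2 - x ^ 2) • (1 : EVVH n ι) := by
  rw [R12H_eq_tensorId, R12H_eq_tensorId, ← tensorId_mul, Rm_mul_Rm_neg, tensorId_smul,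
    tensorId_one]

variable {A : Matrix (Fin n) (Fin n) ℂ}

theorem opT1_KH (hA : ∀ i j : Fin n, gr M i ≠ gr M j → A i j = 0) :
    opT1 M n (KH (ι := ι) A) = tensorId ι (m1 A) := by
  rw [opT1, opT2_KH, P12H_eq_tensorId, ← tensorId_mul, ← tensorId_mul, Pm_mul_m2_mul_Pm hA]

theorem commute_opT1_KH_opT2 (hA : ∀ i j : Fin n, gr M i ≠ gr M j → A i j = 0)
    (X : EVH n ι) : Commute (opT1 M n (KH (ι := ι) A)) (opT2 X) := by
  rw [opT1_KH hA]
  exact commute_tensorId_m1_opT2 A X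

theorem commute_opT1_opT2_KH (hA : ∀ i j : Fin n, gr M i ≠ gr M j → A i j = 0)
    (X : EVH n ι) : Commute (opT1 M n X) (opT2 (KH (ι := ι) A)) := by
  have h := commute_P12H_conj (M := M) (commute_opT1_KH_opT2 hA X).symm
  rwa [P12H_conj_opT1] at h

end Embeddings

section RTT

def RTT (M : ℕ) {n : ℕ} (ι : Type) [Fintype ι] [DecidableEq ι] (hb : ℂ) (D : Set ℂ)
    (T : ℂ → EVH n ι) : Prop :=
  ∀ u ∈ D, ∀ v ∈ D,
    R12H M n ι hb (u - v) * opT1 M n (T u) * opT2 (T v)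
      = opT2 (T v) * opT1 M n (T u) * R12H M n ι hb (u - v)

variable {M n : ℕ} {ι : Type} [Fintype ι] [DecidableEq ι]

theorem opT1_nonsing_inv_mul {X : EVH n ι} (hX : IsUnit X) :
    opT1 M n X⁻¹ * opT1 M n X = 1 := by
  rw [← opT1_mul, Matrix.nonsing_inv_mul X ((Matrix.isUnit_iff_isUnit_det X).mp hX), opT1_one]

theorem opT1_mul_nonsing_inv {X : EVH n ι} (hX : IsUnit X) :
    opT1 M n X * opT1 M n X⁻¹ = 1 := by
  rw [← opT1_mul, Matrix.mul_nonsing_inv X ((Matrix.isUnit_iff_isUnit_det X).mp hX), opT1_one]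

theorem opT2_nonsing_inv_mul {X : EVH n ι} (hX : IsUnit X) : opT2 X⁻¹ * opT2 X = 1 := by
  rw [← opT2_mul, Matrix.nonsing_inv_mul X ((Matrix.isUnit_iff_isUnit_det X).mp hX), opT2_one]

theorem opT2_mul_nonsing_inv {X : EVH n ι} (hX : IsUnit X) : opT2 X * opT2 X⁻¹ = 1 := by
  rw [← opT2_mul, Matrix.mul_nonsing_inv X ((Matrix.isUnit_iff_isUnit_det X).mp hX), opT2_one]

theorem R12H_swap_of_neg {hb x : ℂ} (hx : x ^ 2 ≠ hb ^ 2) {Y Z : EVVH n ι}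
    (h : R12H M n ι hb (-x) * Y * Z = Z * Y * R12H M n ι hb (-x)) :
    R12H M n ι hb x * Z * Y = Y * Z * R12H M n ι hb x := by
  refine mul_mul_swap_of_inverse_smul (sub_ne_zero.mpr hx.symm) (R12H_mul_R12H_neg hb x) ?_ h
  simpa only [neg_neg, neg_sq] using R12H_mul_R12H_neg (M := M) (ι := ι) (n := n) hb (-x)

variable {hb : ℂ} {D : Set ℂ} {T : ℂ → EVH n ι}

theorem RTT.swap (hT : RTT M ι hb D T) {u v : ℂ} (hu : u ∈ D) (hv : v ∈ D) :
    R12H M n ι hb (v - u) * opT2 (T v) * opT1 M n (T u)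
      = opT1 M n (T u) * opT2 (T v) * R12H M n ι hb (v - u) := by
  have h := congrArg (fun Z => P12H M n ι * Z * P12H M n ι) (hT v hv u hu)
  simp only [← P12H_conj_mul_conj, P12H_conj_R12H, P12H_conj_opT2, P12H_conj_opT1] at h
  exact h

theorem RTT.opT1_inv_R12H_opT2 (hT : RTT M ι hb D T) {u v : ℂ} (hu : -u ∈ D) (hv : v ∈ D)
    (hTu : IsUnit (T (-u))) (huv : (u + v) ^ 2 ≠ hb ^ 2) :
    opT1 M n (T (-u))⁻¹ * R12H M n ι hb (u + v) * opT2 (T v)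
      = opT2 (T v) * R12H M n ι hb (u + v) * opT1 M n (T (-u))⁻¹ := by
  have h := hT (-u) hu v hv
  rw [show -u - v = -(u + v) by ring] at h
  exact mul_mul_swap_of_inverse (opT1_nonsing_inv_mul hTu) (opT1_mul_nonsing_inv hTu)
    (R12H_swap_of_neg huv h).symm

theorem RTT.opT2_inv_R12H_opT1 (hT : RTT M ι hb D T) {u v : ℂ} (hu : u ∈ D) (hv : -v ∈ D)
    (hTv : IsUnit (T (-v))) (huv : (u + v) ^ 2 ≠ hb ^ 2) :
    opT2 (T (-v))⁻¹ * R12H M n ι hb (u + v) * opT1 M n (T u)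
      = opT1 M n (T u) * R12H M n ι hb (u + v) * opT2 (T (-v))⁻¹ := by
  have h := hT.swap hu hv
  rw [show -v - u = -(u + v) by ring] at h
  exact mul_mul_swap_of_inverse (opT2_nonsing_inv_mul hTv) (opT2_mul_nonsing_inv hTv)
    (R12H_swap_of_neg huv h).symm

theorem RTT.R12H_opT1_inv_opT2_inv (hT : RTT M ι hb D T) {u v : ℂ} (hu : -u ∈ D)
    (hv : -v ∈ D) (hTu : IsUnit (T (-u))) (hTv : IsUnit (T (-v)))
    (huv : (u - v) ^ 2 ≠ hb ^ 2) :
    R12H M n ι hb (u - v) * opT1 M n (T (-u))⁻¹ * opT2 (T (-v))⁻¹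
      = opT2 (T (-v))⁻¹ * opT1 M n (T (-u))⁻¹ * R12H M n ι hb (u - v) := by
  have h := hT (-u) hu (-v) hv
  rw [show -u - -v = -(u - v) by ring] at h
  have h₁ := mul_mul_swap_of_inverse (opT1_nonsing_inv_mul hTu) (opT1_mul_nonsing_inv hTu)
    (R12H_swap_of_neg huv h).symm
  exact (mul_mul_swap_of_inverse (opT2_nonsing_inv_mul hTv) (opT2_mul_nonsing_inv hTv)
    h₁.symm).symm

end RTT

theorem reflection_equation_R12H {M n : ℕ} {ι : Type} [Fintype ι] [DecidableEq ι] {hb : ℂ}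
    {K : ℂ → Matrix (Fin n) (Fin n) ℂ} (hK : ∀ u i j, gr M i ≠ gr M j → K u i j = 0)
    (hre : GRE M n hb K) (u v : ℂ) :
    R12H M n ι hb (u - v) * opT1 M n (KH (K u)) * R12H M n ι hb (u + v) * opT2 (KH (K v))
      = opT2 (KH (K v)) * R12H M n ι hb (u + v) * opT1 M n (KH (K u)) *
          R12H M n ι hb (u - v) := by
  have h := congrArg (tensorId ι) (hre u v)
  simp only [R21, Pm_mul_Rm_mul_Pm, tensorId_mul] at h
  rwa [← R12H_eq_tensorId, ← R12H_eq_tensorId, ← opT2_KH, ← opT1_KH (hK u)] at h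

theorem statement13_general (M N : ℕ) (hb : ℂ)
    (ι : Type) [Fintype ι] [DecidableEq ι]
    (D : Set ℂ) (hD : ∀ u ∈ D, -u ∈ D)
    (T : ℂ → EVH (M + N) ι)
    (hInv : ∀ u ∈ D, IsUnit (T u))
    (hRTT : ∀ u ∈ D, ∀ v ∈ D,
      R12H M (M + N) ι hb (u - v) * opT1 M (M + N) (T u) * opT2 (T v)
        = opT2 (T v) * opT1 M (M + N) (T u) * R12H M (M + N) ι hb (u - v))
    (K : ℂ → Matrix (Fin (M + N)) (Fin (M + N)) ℂ)
    (hKpar : ∀ (u : ℂ) (i j : Fin (M + N)), gr M i ≠ gr M j → K u i j = 0)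
    (hKre : GRE M (M + N) hb K) :
    ∀ u ∈ D, ∀ v ∈ D, (u + v) ^ 2 ≠ hb ^ 2 → (u - v) ^ 2 ≠ hb ^ 2 →
      R12H M (M + N) ι hb (u - v) *
        opT1 M (M + N) (T u * KH (K u) * (T (-u))⁻¹) *
        R21H M (M + N) ι hb (u + v) *
        opT2 (T v * KH (K v) * (T (-v))⁻¹)
      = opT2 (T v * KH (K v) * (T (-v))⁻¹) *
        R12H M (M + N) ι hb (u + v) *
        opT1 M (M + N) (T u * KH (K u) * (T (-u))⁻¹) *
        R21H M (M + N) ι hb (u - v) := by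
  intro u hu v hv hp hm
  have hT : RTT M ι hb D T := hRTT
  have hu' := hD u hu
  have hv' := hD v hv
  rw [R21H_eq_R12H, R21H_eq_R12H, opT1_mul, opT1_mul, opT2_mul, opT2_mul]
  exact reflection_dressing (hT u hu v hv)
    (hT.opT1_inv_R12H_opT2 hu' hv (hInv _ hu') hp)
    (hT.opT2_inv_R12H_opT1 hu hv' (hInv _ hv') hp)
    (hT.R12H_opT1_inv_opT2_inv hu' hv' (hInv _ hu') (hInv _ hv') hm)
    (commute_opT1_KH_opT2 (hKpar u) _) (commute_opT1_opT2_KH (hKpar v) _)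
    (commute_opT1_opT2_KH (hKpar v) _).symm (commute_opT1_KH_opT2 (hKpar u) _)
    (reflection_equation_R12H hKpar hKre u v)

/-- If `T` is an even invertible solution of the RTT relation on a
symmetric domain `D` and `K` is a parity-preserving solution of the graded
reflection equation, then `B(u) = T(u) (K(u) ⊗ id_H) T(-u)⁻¹` satisfies the graded
reflection equation with operator entries. -/
theorem statement13 (M N : ℕ) (hM : 1 ≤ M) (hN : 1 ≤ N) (hb : ℂ) (hhb : hb ≠ 0)
    (ι : Type) [Fintype ι] [DecidableEq ι] (grH : ι → ℕ)
    (D : Set ℂ) (hD : ∀ u ∈ D, -u ∈ D)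
    (T : ℂ → EVH (M + N) ι)
    (hEven : ∀ u ∈ D, IsEvenOp M grH (T u))
    (hInv : ∀ u ∈ D, IsUnit (T u))
    (hRTT : ∀ u ∈ D, ∀ v ∈ D,
      R12H M (M + N) ι hb (u - v) * opT1 M (M + N) (T u) * opT2 (T v)
        = opT2 (T v) * opT1 M (M + N) (T u) * R12H M (M + N) ι hb (u - v))
    (K : ℂ → Matrix (Fin (M + N)) (Fin (M + N)) ℂ)
    (hKpar : ∀ (u : ℂ) (i j : Fin (M + N)), gr M i ≠ gr M j → K u i j = 0)
    (hKre : GRE M (M + N) hb K) :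
    ∀ u ∈ D, ∀ v ∈ D, (u + v) ^ 2 ≠ hb ^ 2 → (u - v) ^ 2 ≠ hb ^ 2 →
      R12H M (M + N) ι hb (u - v) *
        opT1 M (M + N) (T u * KH (K u) * (T (-u))⁻¹) *
        R21H M (M + N) ι hb (u + v) *
        opT2 (T v * KH (K v) * (T (-v))⁻¹)
      = opT2 (T v * KH (K v) * (T (-v))⁻¹) *
        R12H M (M + N) ι hb (u + v) *
        opT1 M (M + N) (T u * KH (K u) * (T (-u))⁻¹) *
        R21H M (M + N) ι hb (u - v) :=
  statement13_general M N hb ι D hD T hInv hRTT K hKpar hKre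

end SuperSpin
end
end

section
/- Symmetry of the open transfer matrix: let 1 ≤ i, j ≤ n be indices lying in the same block of K and in the same block of K⁺, i.e. K_{ii}(u) = K_{jj}(u) and K⁺_{ii}(u) = K⁺_{jj}(u) as functions of u (equivalently: i and j are both in (L₁, L₂] or both outside, and both in (L₁', L₂'] or both outside). Then the global generator Δ(E_{ij}) commutes with the open transfer matrix: [Δ(E_{ij}), b(u)] = 0 for all u at which b is defined. -/
open scoped BigOperators

noncomputable section

namespace SuperSpin

/-! ### Auxiliary lemmas for Statement 17 -/

lemma npw (a b : ℕ) (h : a % 2 = b % 2) : ((-1 : ℂ)) ^ a = (-1) ^ b := by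
  rcases Nat.even_or_odd a with ha | ha
  · have := Nat.even_iff.1 ha
    rw [ha.neg_one_pow, (Nat.even_iff.2 (by omega)).neg_one_pow]
  · have := Nat.odd_iff.1 ha
    rw [ha.neg_one_pow, (Nat.odd_iff.2 (by omega)).neg_one_pow]

lemma gr_cases (M : ℕ) {n : ℕ} (x : Fin n) : gr M x = 0 ∨ gr M x = 1 := by
  unfold gr; split <;> simp

/-- One term of the coproduct `Delta`. -/
def Eterm (M n L : ℕ) (i j : Fin n) (k : Fin L) : Ten n L :=
  Matrix.of fun f g =>
    if f k = i ∧ g k = j ∧ ∀ l, l ≠ k → f l = g l then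
      (-1 : ℂ) ^ ((gr M i + gr M j) *
        ∑ l ∈ Finset.univ.filter (fun l => l < k), gr M (g l))
    else 0

lemma Delta_eq (M n L : ℕ) (i j : Fin n) :
    Delta M n L i j = ∑ k, Eterm M n L i j k := rfl

lemma Eterm_mul_apply (M n L : ℕ) (i j : Fin n) (k : Fin L) (X : Ten n L)
    (f g : Fin L → Fin n) :
    (Eterm M n L i j k * X) f g =
      if f k = i then
        (-1 : ℂ) ^ ((gr M i + gr M j) *
            ∑ l ∈ Finset.univ.filter (fun l => l < k), gr M (f l)) *
          X (Function.update f k j) g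
      else 0 := by
  rw [Matrix.mul_apply]
  by_cases hf : f k = i
  · rw [if_pos hf, Finset.sum_eq_single (Function.update f k j)]
    · simp only [Eterm, Matrix.of_apply]
      rw [if_pos ⟨hf, Function.update_self _ _ _,
            fun l hl => (Function.update_of_ne hl _ _).symm⟩]
      have hsum : ∑ l ∈ Finset.univ.filter (fun l => l < k), gr M (Function.update f k j l)
          = ∑ l ∈ Finset.univ.filter (fun l => l < k), gr M (f l) :=
        Finset.sum_congr rfl fun l hl => by
          rw [Function.update_of_ne (ne_of_lt (Finset.mem_filter.1 hl).2)]
      rw [hsum]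
    · intro h _ hne
      simp only [Eterm, Matrix.of_apply]
      rw [if_neg, zero_mul]
      rintro ⟨h1, h2, h3⟩
      exact hne (funext fun l => by
        rcases eq_or_ne l k with rfl | hl
        · rw [Function.update_self, h2]
        · rw [Function.update_of_ne hl, ← h3 l hl])
    · intro h; exact absurd (Finset.mem_univ _) h
  · rw [if_neg hf]
    apply Finset.sum_eq_zero
    intro h _
    simp only [Eterm, Matrix.of_apply]
    rw [if_neg, zero_mul]
    rintro ⟨h1, -, -⟩
    exact hf h1

lemma mul_Eterm_apply (M n L : ℕ) (i j : Fin n) (k : Fin L) (X : Ten n L)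
    (f g : Fin L → Fin n) :
    (X * Eterm M n L i j k) f g =
      if g k = j then
        X f (Function.update g k i) *
          (-1 : ℂ) ^ ((gr M i + gr M j) *
            ∑ l ∈ Finset.univ.filter (fun l => l < k), gr M (g l))
      else 0 := by
  rw [Matrix.mul_apply]
  by_cases hg : g k = j
  · rw [if_pos hg, Finset.sum_eq_single (Function.update g k i)]
    · simp only [Eterm, Matrix.of_apply]
      rw [if_pos ⟨Function.update_self _ _ _, hg,
            fun l hl => Function.update_of_ne hl _ _⟩]
    · intro h _ hne
      simp only [Eterm, Matrix.of_apply]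
      rw [if_neg, mul_zero]
      rintro ⟨h1, h2, h3⟩
      exact hne (funext fun l => by
        rcases eq_or_ne l k with rfl | hl
        · rw [Function.update_self, h1]
        · rw [Function.update_of_ne hl, h3 l hl])
    · intro h; exact absurd (Finset.mem_univ _) h
  · rw [if_neg hg]
    apply Finset.sum_eq_zero
    intro h _
    simp only [Eterm, Matrix.of_apply]
    rw [if_neg, mul_zero]
    rintro ⟨-, h2, -⟩
    exact hg h2

lemma Rm_apply (M n : ℕ) (hb w : ℂ) (p q : Fin n × Fin n) :
    Rm M n hb w p q =
      (if p.1 = q.1 ∧ p.2 = q.2 then w else 0) -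
        (if p.1 = q.2 ∧ p.2 = q.1 then hb * (-1 : ℂ) ^ (gr M q.1 * gr M q.2) else 0) := by
  simp only [Rm, Pm, Matrix.sub_apply, Matrix.smul_apply, Matrix.one_apply, Matrix.of_apply,
    smul_eq_mul, Prod.ext_iff]
  split_ifs <;> ring
lemma sum_gr_offone {m n : ℕ} (M : ℕ) (f g : Fin m → Fin n) (s : Finset (Fin m))
    (z : Fin m) (hz : z ∈ s)
    (h : ∀ l ∈ s, l ≠ z → f l = g l) :
    ∑ l ∈ s, gr M (f l) + gr M (g z) = ∑ l ∈ s, gr M (g l) + gr M (f z) := by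
  rw [← Finset.add_sum_erase _ (fun l => gr M (f l)) hz,
      ← Finset.add_sum_erase _ (fun l => gr M (g l)) hz]
  have heq : ∑ l ∈ s.erase z, gr M (f l) = ∑ l ∈ s.erase z, gr M (g l) :=
    Finset.sum_congr rfl fun l hl =>
      congrArg _ (h l (Finset.mem_of_mem_erase hl) (Finset.ne_of_mem_erase hl))
  omega

lemma sum_gr_offtwo {m n : ℕ} (M : ℕ) (f g : Fin m → Fin n) (s : Finset (Fin m))
    (z q : Fin m) (hz : z ∈ s) (hq : q ∈ s) (hzq : z ≠ q)
    (h : ∀ l ∈ s, l ≠ z → l ≠ q → f l = g l) :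
    ∑ l ∈ s, gr M (f l) + (gr M (g z) + gr M (g q))
      = ∑ l ∈ s, gr M (g l) + (gr M (f z) + gr M (f q)) := by
  have hq' : q ∈ s.erase z := Finset.mem_erase.2 ⟨Ne.symm hzq, hq⟩
  rw [← Finset.add_sum_erase _ (fun l => gr M (f l)) hz,
      ← Finset.add_sum_erase _ (fun l => gr M (g l)) hz,
      ← Finset.add_sum_erase _ (fun l => gr M (f l)) hq',
      ← Finset.add_sum_erase _ (fun l => gr M (g l)) hq']
  have heq : ∑ l ∈ (s.erase z).erase q, gr M (f l)
      = ∑ l ∈ (s.erase z).erase q, gr M (g l) :=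
    Finset.sum_congr rfl fun l hl => by
      have h1 := Finset.mem_of_mem_erase hl
      exact congrArg _ (h l (Finset.mem_of_mem_erase h1) (Finset.ne_of_mem_erase h1)
        (Finset.ne_of_mem_erase hl))
  omega

lemma sum_upd_notMem {m n : ℕ} (M : ℕ) (g : Fin m → Fin n) (s : Finset (Fin m))
    (k : Fin m) (hk : k ∉ s) (v : Fin n) :
    ∑ l ∈ s, gr M (Function.update g k v l) = ∑ l ∈ s, gr M (g l) :=
  Finset.sum_congr rfl fun l hl => by
    rw [Function.update_of_ne (by rintro rfl; exact hk hl)]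

lemma sum_upd_mem {m n : ℕ} (M : ℕ) (g : Fin m → Fin n) (s : Finset (Fin m))
    (k : Fin m) (hk : k ∈ s) (v : Fin n) :
    ∑ l ∈ s, gr M (Function.update g k v l) + gr M (g k)
      = ∑ l ∈ s, gr M (g l) + gr M v := by
  rw [← Finset.add_sum_erase _ (fun l => gr M (Function.update g k v l)) hk,
      ← Finset.add_sum_erase _ (fun l => gr M (g l)) hk, Function.update_self]
  have heq : ∑ l ∈ s.erase k, gr M (Function.update g k v l)
      = ∑ l ∈ s.erase k, gr M (g l) :=
    Finset.sum_congr rfl fun l hl => by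
      rw [Function.update_of_ne (Finset.ne_of_mem_erase hl)]
  omega

lemma spectator (M n L : ℕ) (i j : Fin n) (hb w : ℂ) (q k : Fin (L + 1))
    (hq0 : q ≠ 0) (hk0 : k ≠ 0) (hkq : k ≠ q) (f g : Fin (L + 1) → Fin n) :
    (if f k = i then
        (-1 : ℂ) ^ ((gr M i + gr M j) *
            ∑ l ∈ Finset.univ.filter (fun l => l < k), gr M (f l)) *
          kEmb M n (L + 1) 0 q (Rm M n hb w) (Function.update f k j) g
      else 0)
      = (if g k = j then
          kEmb M n (L + 1) 0 q (Rm M n hb w) f (Function.update g k i) *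
            (-1 : ℂ) ^ ((gr M i + gr M j) *
              ∑ l ∈ Finset.univ.filter (fun l => l < k), gr M (g l))
        else 0) := by
  by_cases hfk : f k = i
  case neg =>
    rw [if_neg hfk]
    by_cases hgk : g k = j
    · rw [if_pos hgk]
      have hcond : ¬ (∀ l, l ≠ 0 → l ≠ q → f l = Function.update g k i l) := by
        intro h
        have hh := h k hk0 hkq
        rw [Function.update_self] at hh
        exact hfk hh
      simp only [kEmb, Matrix.of_apply, if_neg hcond, zero_mul]
    · rw [if_neg hgk]
  case pos =>
    rw [if_pos hfk]
    by_cases hgk : g k = j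
    case neg =>
      rw [if_neg hgk]
      have hcond : ¬ (∀ l, l ≠ 0 → l ≠ q → Function.update f k j l = g l) := by
        intro h
        have hh := h k hk0 hkq
        rw [Function.update_self] at hh
        exact hgk hh.symm
      simp only [kEmb, Matrix.of_apply, if_neg hcond, zero_mul, mul_zero]
    case pos =>
      rw [if_pos hgk]
      by_cases hC : ∀ l : Fin (L + 1), l ≠ 0 → l ≠ q → l ≠ k → f l = g l
      case neg =>
        have h1 : ¬ (∀ l, l ≠ 0 → l ≠ q → Function.update f k j l = g l) := by
          intro h; apply hC; intro l h0 hq hlk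
          have hh := h l h0 hq; rwa [Function.update_of_ne hlk] at hh
        have h2 : ¬ (∀ l, l ≠ 0 → l ≠ q → f l = Function.update g k i l) := by
          intro h; apply hC; intro l h0 hq hlk
          have hh := h l h0 hq; rwa [Function.update_of_ne hlk] at hh
        simp only [kEmb, Matrix.of_apply, if_neg h1, if_neg h2, zero_mul, mul_zero]
      case pos =>
        have h1 : (∀ l, l ≠ 0 → l ≠ q → Function.update f k j l = g l) := by
          intro l h0 hq
          rcases eq_or_ne l k with rfl | hlk
          · rw [Function.update_self]; exact hgk.symm
          · rw [Function.update_of_ne hlk]; exact hC l h0 hq hlk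
        have h2 : (∀ l, l ≠ 0 → l ≠ q → f l = Function.update g k i l) := by
          intro l h0 hq
          rcases eq_or_ne l k with rfl | hlk
          · rw [Function.update_self]; exact hfk
          · rw [Function.update_of_ne hlk]; exact hC l h0 hq hlk
        simp only [kEmb, Matrix.of_apply, if_pos h1, if_pos h2,
          Function.update_of_ne (Ne.symm hk0), Function.update_of_ne (Ne.symm hkq)]
        rcases hkq.lt_or_gt with hlt | hlt
        · -- k < q : k lies strictly between 0 and q
          have hmem : k ∈ Finset.univ.filter (fun l => (0 : Fin (L+1)) < l ∧ l < q) := by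
            simp [Fin.pos_of_ne_zero hk0, hlt]
          have hB := sum_upd_mem M g _ k hmem i
          have hgk' : gr M (g k) = gr M j := congrArg _ hgk
          have hSL := sum_gr_offone M f g (Finset.univ.filter (fun l => l < k)) 0
            (by simp [Fin.pos_of_ne_zero hk0])
            (fun l hl h0 => hC l h0
              (ne_of_lt (lt_trans (Finset.mem_filter.1 hl).2 hlt))
              (ne_of_lt (Finset.mem_filter.1 hl).2))
          by_cases hd : f 0 = g 0 ∧ f q = g q
          · have e1 : gr M (f 0) = gr M (g 0) := congrArg _ hd.1
            have e2 : gr M (f q) = gr M (g q) := congrArg _ hd.2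
            have key : (-1 : ℂ) ^ ((gr M i + gr M j) *
                  ∑ l ∈ Finset.univ.filter (fun l => l < k), gr M (f l)) *
                (-1 : ℂ) ^ ((gr M (f q) + gr M (g q)) *
                  ∑ l ∈ Finset.univ.filter (fun l => (0 : Fin (L+1)) < l ∧ l < q), gr M (g l))
                = (-1 : ℂ) ^ ((gr M (f q) + gr M (g q)) *
                  ∑ l ∈ Finset.univ.filter (fun l => (0 : Fin (L+1)) < l ∧ l < q),
                    gr M (Function.update g k i l)) *
                (-1 : ℂ) ^ ((gr M i + gr M j) *
                  ∑ l ∈ Finset.univ.filter (fun l => l < k), gr M (g l)) := by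
              rw [← pow_add, ← pow_add]
              refine npw _ _ ?_
              rcases gr_cases M i with hgi | hgi <;> rcases gr_cases M j with hgj | hgj <;>
                rcases gr_cases M (f q) with hfq' | hfq' <;>
                rcases gr_cases M (g q) with hgq' | hgq' <;>
                simp only [hgi, hgj, hfq', hgq'] <;> omega
            linear_combination (Rm M n hb w (f 0, f q) (g 0, g q)) * key
          · by_cases hp : f 0 = g q ∧ f q = g 0
            · have e1 : gr M (f 0) = gr M (g q) := congrArg _ hp.1
              have e2 : gr M (f q) = gr M (g 0) := congrArg _ hp.2
              have key : (-1 : ℂ) ^ ((gr M i + gr M j) *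
                    ∑ l ∈ Finset.univ.filter (fun l => l < k), gr M (f l)) *
                  (-1 : ℂ) ^ ((gr M (f q) + gr M (g q)) *
                    ∑ l ∈ Finset.univ.filter (fun l => (0 : Fin (L+1)) < l ∧ l < q), gr M (g l))
                  = (-1 : ℂ) ^ ((gr M (f q) + gr M (g q)) *
                    ∑ l ∈ Finset.univ.filter (fun l => (0 : Fin (L+1)) < l ∧ l < q),
                      gr M (Function.update g k i l)) *
                  (-1 : ℂ) ^ ((gr M i + gr M j) *
                    ∑ l ∈ Finset.univ.filter (fun l => l < k), gr M (g l)) := by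
                rw [← pow_add, ← pow_add]
                refine npw _ _ ?_
                rcases gr_cases M i with hgi | hgi <;> rcases gr_cases M j with hgj | hgj <;>
                  rcases gr_cases M (f q) with hfq' | hfq' <;>
                  rcases gr_cases M (g q) with hgq' | hgq' <;>
                  simp only [hgi, hgj, hfq', hgq'] <;> omega
              linear_combination (Rm M n hb w (f 0, f q) (g 0, g q)) * key
            · have hR : Rm M n hb w (f 0, f q) (g 0, g q) = 0 := by
                rw [Rm_apply]; simp [hd, hp]
              rw [hR]; ring
        · -- q < k : k is not between 0 and q
          have hnot : k ∉ Finset.univ.filter (fun l => (0 : Fin (L+1)) < l ∧ l < q) := by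
            simp only [Finset.mem_filter, Finset.mem_univ, true_and, not_and]
            intro _; exact fun h => absurd hlt (asymm h)
          have hB := sum_upd_notMem M g _ k hnot i
          have hSL := sum_gr_offtwo M f g (Finset.univ.filter (fun l => l < k)) 0 q
            (by simp [Fin.pos_of_ne_zero hk0]) (by simp [hlt]) (Ne.symm hq0)
            (fun l hl h0 hq => hC l h0 hq (ne_of_lt (Finset.mem_filter.1 hl).2))
          by_cases hd : f 0 = g 0 ∧ f q = g q
          · have e1 : gr M (f 0) = gr M (g 0) := congrArg _ hd.1
            have e2 : gr M (f q) = gr M (g q) := congrArg _ hd.2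
            have key : (-1 : ℂ) ^ ((gr M i + gr M j) *
                  ∑ l ∈ Finset.univ.filter (fun l => l < k), gr M (f l)) *
                (-1 : ℂ) ^ ((gr M (f q) + gr M (g q)) *
                  ∑ l ∈ Finset.univ.filter (fun l => (0 : Fin (L+1)) < l ∧ l < q), gr M (g l))
                = (-1 : ℂ) ^ ((gr M (f q) + gr M (g q)) *
                  ∑ l ∈ Finset.univ.filter (fun l => (0 : Fin (L+1)) < l ∧ l < q),
                    gr M (Function.update g k i l)) *
                (-1 : ℂ) ^ ((gr M i + gr M j) *
                  ∑ l ∈ Finset.univ.filter (fun l => l < k), gr M (g l)) := by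
              rw [← pow_add, ← pow_add]
              refine npw _ _ ?_
              rcases gr_cases M i with hgi | hgi <;> rcases gr_cases M j with hgj | hgj <;>
                simp only [hgi, hgj, hB] <;> omega
            linear_combination (Rm M n hb w (f 0, f q) (g 0, g q)) * key
          · by_cases hp : f 0 = g q ∧ f q = g 0
            · have e1 : gr M (f 0) = gr M (g q) := congrArg _ hp.1
              have e2 : gr M (f q) = gr M (g 0) := congrArg _ hp.2
              have key : (-1 : ℂ) ^ ((gr M i + gr M j) *
                    ∑ l ∈ Finset.univ.filter (fun l => l < k), gr M (f l)) *
                  (-1 : ℂ) ^ ((gr M (f q) + gr M (g q)) *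
                    ∑ l ∈ Finset.univ.filter (fun l => (0 : Fin (L+1)) < l ∧ l < q), gr M (g l))
                  = (-1 : ℂ) ^ ((gr M (f q) + gr M (g q)) *
                    ∑ l ∈ Finset.univ.filter (fun l => (0 : Fin (L+1)) < l ∧ l < q),
                      gr M (Function.update g k i l)) *
                  (-1 : ℂ) ^ ((gr M i + gr M j) *
                    ∑ l ∈ Finset.univ.filter (fun l => l < k), gr M (g l)) := by
                rw [← pow_add, ← pow_add]
                refine npw _ _ ?_
                rcases gr_cases M i with hgi | hgi <;> rcases gr_cases M j with hgj | hgj <;>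
                  simp only [hgi, hgj, hB] <;> omega
              linear_combination (Rm M n hb w (f 0, f q) (g 0, g q)) * key
            · have hR : Rm M n hb w (f 0, f q) (g 0, g q) = 0 := by
                rw [Rm_apply]; simp [hd, hp]
              rw [hR]; ring
lemma Rm_apply' (M n : ℕ) (hb w : ℂ) (p1 p2 q1 q2 : Fin n) :
    Rm M n hb w (p1, p2) (q1, q2) =
      (if p1 = q1 ∧ p2 = q2 then w else 0) -
        (if p1 = q2 ∧ p2 = q1 then hb * (-1 : ℂ) ^ (gr M q1 * gr M q2) else 0) :=
  Rm_apply M n hb w (p1, p2) (q1, q2)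

lemma pair_core (M n : ℕ) (w hb : ℂ) (B : ℕ) (a b c d i j : Fin n) :
    (if a = i then (1 : ℂ) else 0) *
        (Rm M n hb w (j, b) (c, d) * (-1 : ℂ) ^ ((gr M b + gr M d) * B))
      + (if b = i then (1 : ℂ) else 0) *
        ((-1 : ℂ) ^ ((gr M i + gr M j) * (gr M a + B)) *
          (Rm M n hb w (a, j) (c, d) * (-1 : ℂ) ^ ((gr M j + gr M d) * B)))
    = (if c = j then (1 : ℂ) else 0) *
        (Rm M n hb w (a, b) (i, d) * (-1 : ℂ) ^ ((gr M b + gr M d) * B))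
      + (if d = j then (1 : ℂ) else 0) *
        (Rm M n hb w (a, b) (c, i) * ((-1 : ℂ) ^ ((gr M b + gr M i) * B) *
          (-1 : ℂ) ^ ((gr M i + gr M j) * (gr M c + B)))) := by
  have flip : ∀ x y : Fin n, (if x = y then (1 : ℂ) else 0) = (if y = x then 1 else 0) := by
    intro x y; simp [eq_comm]
  have e1 : (if a = i then (1 : ℂ) else 0) * (if j = c ∧ b = d then w else 0)
      = (if c = j then (1 : ℂ) else 0) * (if a = i ∧ b = d then w else 0) := by
    rw [flip c j]
    by_cases h1 : a = i <;> by_cases h2 : j = c <;> by_cases h3 : b = d <;>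
      simp [h1, h2, h3]
  have e2 : (if b = i then (1 : ℂ) else 0) * ((-1 : ℂ) ^ ((gr M i + gr M j) * (gr M a + B))) *
        (if a = c ∧ j = d then w else 0) * (-1 : ℂ) ^ ((gr M j + gr M d) * B)
      = (if d = j then (1 : ℂ) else 0) * (if a = c ∧ b = i then w else 0) *
        (-1 : ℂ) ^ ((gr M b + gr M i) * B) * (-1 : ℂ) ^ ((gr M i + gr M j) * (gr M c + B)) := by
    rw [flip d j]
    by_cases h1 : b = i
    · by_cases h2 : a = c
      · by_cases h3 : j = d
        · rw [if_pos h1, if_pos ⟨h2, h3⟩, if_pos h3, if_pos ⟨h2, h1⟩]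
          have g1 : gr M b = gr M i := congrArg _ h1
          have g2 : gr M a = gr M c := congrArg _ h2
          have g3 : gr M j = gr M d := congrArg _ h3
          have key : (-1 : ℂ) ^ ((gr M i + gr M j) * (gr M a + B) + (gr M j + gr M d) * B)
              = (-1 : ℂ) ^ ((gr M b + gr M i) * B + (gr M i + gr M j) * (gr M c + B)) := by
            refine npw _ _ ?_
            rcases gr_cases M i with hx1 | hx1 <;> rcases gr_cases M j with hx2 | hx2 <;>
              rcases gr_cases M b with hx3 | hx3 <;> rcases gr_cases M d with hx4 | hx4 <;>
              simp only [hx1, hx2, hx3, hx4] <;> omega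
          linear_combination w * key
        · simp [h3]
      · simp [h2]
    · simp [h1]
  have e3 : (if a = i then (1 : ℂ) else 0) *
        (if j = d ∧ b = c then hb * (-1 : ℂ) ^ (gr M c * gr M d) else 0) *
        (-1 : ℂ) ^ ((gr M b + gr M d) * B)
      = (if d = j then (1 : ℂ) else 0) *
        (if a = i ∧ b = c then hb * (-1 : ℂ) ^ (gr M c * gr M i) else 0) *
        (-1 : ℂ) ^ ((gr M b + gr M i) * B) * (-1 : ℂ) ^ ((gr M i + gr M j) * (gr M c + B)) := by
    rw [flip d j]
    by_cases h1 : a = i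
    · by_cases h2 : j = d
      · by_cases h3 : b = c
        · rw [if_pos h1, if_pos ⟨h2, h3⟩, if_pos h2, if_pos ⟨h1, h3⟩]
          have g2 : gr M j = gr M d := congrArg _ h2
          have g3 : gr M b = gr M c := congrArg _ h3
          have key : (-1 : ℂ) ^ (gr M c * gr M d + (gr M b + gr M d) * B)
              = (-1 : ℂ) ^ (gr M c * gr M i +
                  ((gr M b + gr M i) * B + (gr M i + gr M j) * (gr M c + B))) := by
            refine npw _ _ ?_
            rcases gr_cases M i with hx1 | hx1 <;> rcases gr_cases M j with hx2 | hx2 <;>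
              rcases gr_cases M b with hx3 | hx3 <;> rcases gr_cases M c with hx4 | hx4 <;>
              rcases gr_cases M d with hx5 | hx5 <;>
              simp only [hx1, hx2, hx3, hx4, hx5] <;> omega
          linear_combination hb * key
        · simp [h3]
      · simp [h2]
    · simp [h1]
  have e4 : (if b = i then (1 : ℂ) else 0) * ((-1 : ℂ) ^ ((gr M i + gr M j) * (gr M a + B))) *
        (if a = d ∧ j = c then hb * (-1 : ℂ) ^ (gr M c * gr M d) else 0) *
        (-1 : ℂ) ^ ((gr M j + gr M d) * B)
      = (if c = j then (1 : ℂ) else 0) *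
        (if a = d ∧ b = i then hb * (-1 : ℂ) ^ (gr M i * gr M d) else 0) *
        (-1 : ℂ) ^ ((gr M b + gr M d) * B) := by
    rw [flip c j]
    by_cases h1 : b = i
    · by_cases h2 : a = d
      · by_cases h3 : j = c
        · rw [if_pos h1, if_pos ⟨h2, h3⟩, if_pos h3, if_pos ⟨h2, h1⟩]
          have g1 : gr M b = gr M i := congrArg _ h1
          have g2 : gr M a = gr M d := congrArg _ h2
          have g3 : gr M j = gr M c := congrArg _ h3
          have key : (-1 : ℂ) ^ ((gr M i + gr M j) * (gr M a + B) +
                (gr M c * gr M d + (gr M j + gr M d) * B))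
              = (-1 : ℂ) ^ (gr M i * gr M d + (gr M b + gr M d) * B) := by
            refine npw _ _ ?_
            rcases gr_cases M i with hx1 | hx1 <;> rcases gr_cases M j with hx2 | hx2 <;>
              rcases gr_cases M b with hx3 | hx3 <;> rcases gr_cases M c with hx4 | hx4 <;>
              rcases gr_cases M d with hx5 | hx5 <;>
              simp only [hx1, hx2, hx3, hx4, hx5] <;> omega
          linear_combination hb * key
        · simp [h3]
      · simp [h2]
    · simp [h1]
  simp only [Rm_apply']
  linear_combination ((-1 : ℂ) ^ ((gr M b + gr M d) * B)) * e1 + e2 - e3 - e4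
lemma ite_fac (P : Prop) [Decidable P] (x y : ℂ) :
    (if P then x * y else 0) = (if P then 1 else 0) * (x * y) := by
  split_ifs <;> ring

lemma pairlem (M n L : ℕ) (i j : Fin n) (hb w : ℂ) (q : Fin (L + 1)) (hq0 : q ≠ 0)
    (f g : Fin (L + 1) → Fin n) :
    (if f 0 = i then
        (-1 : ℂ) ^ ((gr M i + gr M j) *
            ∑ l ∈ Finset.univ.filter (fun l => l < (0 : Fin (L + 1))), gr M (f l)) *
          kEmb M n (L + 1) 0 q (Rm M n hb w) (Function.update f 0 j) g
      else 0)
    + (if f q = i then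
        (-1 : ℂ) ^ ((gr M i + gr M j) *
            ∑ l ∈ Finset.univ.filter (fun l => l < q), gr M (f l)) *
          kEmb M n (L + 1) 0 q (Rm M n hb w) (Function.update f q j) g
      else 0)
    = (if g 0 = j then
        kEmb M n (L + 1) 0 q (Rm M n hb w) f (Function.update g 0 i) *
          (-1 : ℂ) ^ ((gr M i + gr M j) *
            ∑ l ∈ Finset.univ.filter (fun l => l < (0 : Fin (L + 1))), gr M (g l))
      else 0)
    + (if g q = j then
        kEmb M n (L + 1) 0 q (Rm M n hb w) f (Function.update g q i) *
          (-1 : ℂ) ^ ((gr M i + gr M j) *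
            ∑ l ∈ Finset.univ.filter (fun l => l < q), gr M (g l))
      else 0) := by
  by_cases hC : ∀ l : Fin (L + 1), l ≠ 0 → l ≠ q → f l = g l
  case neg =>
    have c1 : ¬ (∀ l, l ≠ 0 → l ≠ q → Function.update f 0 j l = g l) := by
      intro h; apply hC; intro l h0 hq
      have hh := h l h0 hq; rwa [Function.update_of_ne h0] at hh
    have c2 : ¬ (∀ l, l ≠ 0 → l ≠ q → Function.update f q j l = g l) := by
      intro h; apply hC; intro l h0 hq
      have hh := h l h0 hq; rwa [Function.update_of_ne hq] at hh
    have c3 : ¬ (∀ l, l ≠ 0 → l ≠ q → f l = Function.update g 0 i l) := by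
      intro h; apply hC; intro l h0 hq
      have hh := h l h0 hq; rwa [Function.update_of_ne h0] at hh
    have c4 : ¬ (∀ l, l ≠ 0 → l ≠ q → f l = Function.update g q i l) := by
      intro h; apply hC; intro l h0 hq
      have hh := h l h0 hq; rwa [Function.update_of_ne hq] at hh
    simp only [kEmb, Matrix.of_apply, if_neg c1, if_neg c2, if_neg c3, if_neg c4,
      zero_mul, mul_zero, ite_self, add_zero]
  case pos =>
    have d1 : ∀ l, l ≠ 0 → l ≠ q → Function.update f 0 j l = g l := by
      intro l h0 hq; rw [Function.update_of_ne h0]; exact hC l h0 hq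
    have d2 : ∀ l, l ≠ 0 → l ≠ q → Function.update f q j l = g l := by
      intro l h0 hq; rw [Function.update_of_ne hq]; exact hC l h0 hq
    have d3 : ∀ l, l ≠ 0 → l ≠ q → f l = Function.update g 0 i l := by
      intro l h0 hq; rw [Function.update_of_ne h0]; exact hC l h0 hq
    have d4 : ∀ l, l ≠ 0 → l ≠ q → f l = Function.update g q i l := by
      intro l h0 hq; rw [Function.update_of_ne hq]; exact hC l h0 hq
    have h0f : (∑ l ∈ Finset.univ.filter (fun l => l < (0 : Fin (L + 1))), gr M (f l)) = 0 := by
      simp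
    have h0g : (∑ l ∈ Finset.univ.filter (fun l => l < (0 : Fin (L + 1))), gr M (g l)) = 0 := by
      simp
    have hsplit : Finset.univ.filter (fun l => l < q)
        = insert (0 : Fin (L + 1)) (Finset.univ.filter (fun l => (0 : Fin (L + 1)) < l ∧ l < q)) := by
      ext l
      simp only [Finset.mem_filter, Finset.mem_univ, true_and, Finset.mem_insert]
      constructor
      · intro h
        rcases eq_or_ne l 0 with rfl | h0
        · exact Or.inl rfl
        · exact Or.inr ⟨Fin.pos_of_ne_zero h0, h⟩
      · rintro (rfl | ⟨-, h⟩)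
        · exact Fin.pos_of_ne_zero hq0
        · exact h
    have h0notmem : (0 : Fin (L + 1)) ∉
        Finset.univ.filter (fun l => (0 : Fin (L + 1)) < l ∧ l < q) := by simp
    have hqnotmem : q ∉ Finset.univ.filter (fun l => (0 : Fin (L + 1)) < l ∧ l < q) := by
      simp [lt_irrefl]
    have hSf : ∑ l ∈ Finset.univ.filter (fun l => l < q), gr M (f l)
        = gr M (f 0) + ∑ l ∈ Finset.univ.filter (fun l => (0 : Fin (L + 1)) < l ∧ l < q),
            gr M (f l) := by
      rw [hsplit, Finset.sum_insert h0notmem]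
    have hSg : ∑ l ∈ Finset.univ.filter (fun l => l < q), gr M (g l)
        = gr M (g 0) + ∑ l ∈ Finset.univ.filter (fun l => (0 : Fin (L + 1)) < l ∧ l < q),
            gr M (g l) := by
      rw [hsplit, Finset.sum_insert h0notmem]
    have hfgB : ∑ l ∈ Finset.univ.filter (fun l => (0 : Fin (L + 1)) < l ∧ l < q), gr M (f l)
        = ∑ l ∈ Finset.univ.filter (fun l => (0 : Fin (L + 1)) < l ∧ l < q), gr M (g l) :=
      Finset.sum_congr rfl fun l hl => by
        have hm := Finset.mem_filter.1 hl
        exact congrArg _ (hC l (ne_of_gt hm.2.1) (ne_of_lt hm.2.2))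
    have hupd0 := sum_upd_notMem M g _ 0 h0notmem i
    have hupdq := sum_upd_notMem M g _ q hqnotmem i
    simp only [kEmb, Matrix.of_apply, if_pos d1, if_pos d2, if_pos d3, if_pos d4,
      Function.update_self, Function.update_of_ne hq0, Function.update_of_ne (Ne.symm hq0),
      h0f, h0g, hSf, hSg, hfgB, hupd0, hupdq, Nat.mul_zero, pow_zero, one_mul, mul_one]
    simp only [ite_fac]
    linear_combination pair_core M n w hb
      (∑ l ∈ Finset.univ.filter (fun l => (0 : Fin (L + 1)) < l ∧ l < q), gr M (g l))
      (f 0) (f q) (g 0) (g q) i j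
lemma update_cons_succ {n L : ℕ} (a v : Fin n) (f : Fin L → Fin n) (k : Fin L) :
    Function.update (Fin.cons a f : Fin (L + 1) → Fin n) k.succ v
      = Fin.cons a (Function.update f k v) := by
  rw [Fin.cons_update]

lemma commA (M n L : ℕ) (i j : Fin n) (hb w : ℂ) (q : Fin (L + 1)) (hq0 : q ≠ 0) :
    Delta M n (L + 1) i j * kEmb M n (L + 1) 0 q (Rm M n hb w)
      = kEmb M n (L + 1) 0 q (Rm M n hb w) * Delta M n (L + 1) i j := by
  rw [Delta_eq, Finset.sum_mul, Finset.mul_sum]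
  ext f g
  rw [Matrix.sum_apply, Matrix.sum_apply, ← sub_eq_zero, ← Finset.sum_sub_distrib]
  have hz : ∀ k ∈ (Finset.univ : Finset (Fin (L + 1))), k ∉ ({0, q} : Finset (Fin (L + 1))) →
      (Eterm M n (L + 1) i j k * kEmb M n (L + 1) 0 q (Rm M n hb w)) f g -
        (kEmb M n (L + 1) 0 q (Rm M n hb w) * Eterm M n (L + 1) i j k) f g = 0 := by
    intro k _ hk
    simp only [Finset.mem_insert, Finset.mem_singleton, not_or] at hk
    rw [Eterm_mul_apply, mul_Eterm_apply, sub_eq_zero]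
    exact spectator M n L i j hb w q k hq0 hk.1 hk.2 f g
  rw [← Finset.sum_subset (Finset.subset_univ ({0, q} : Finset (Fin (L + 1)))) hz,
    Finset.sum_pair (Ne.symm hq0)]
  simp only [Eterm_mul_apply, mul_Eterm_apply]
  linear_combination pairlem M n L i j hb w q hq0 f g

lemma commT (M n L : ℕ) (i j : Fin n) (hb : ℂ) (a : Fin L → ℂ) (u : ℂ) :
    Commute (Delta M n (L + 1) i j) (Tmono M n L hb a u) := by
  apply Commute.list_prod_right
  intro x hx
  rw [List.mem_ofFn] at hx
  obtain ⟨k, rfl⟩ := hx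
  exact commA M n L i j hb (u - a k) k.succ (Fin.succ_ne_zero k)

lemma onAux_diag (n L : ℕ) (ξ u : ℂ) (L₁ L₂ : ℕ) :
    (onAux (Kdiag n ξ L₁ L₂ u) : Ten n (L + 1))
      = Matrix.diagonal (fun f => kdval ξ L₁ L₂ ((f 0 : ℕ) + 1) u) := by
  ext f g
  simp only [onAux, Matrix.of_apply, Kdiag]
  by_cases h : f = g
  · subst h
    rw [Matrix.diagonal_apply_eq, Matrix.diagonal_apply_eq]
    simp
  · rw [Matrix.diagonal_apply_ne _ h]
    by_cases h0 : f 0 = g 0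
    · have hne : ¬ (∀ l, l ≠ 0 → f l = g l) := by
        intro hall; apply h; funext l
        rcases eq_or_ne l 0 with rfl | hl
        · exact h0
        · exact hall l hl
      rw [if_neg hne, mul_zero]
    · rw [Matrix.diagonal_apply_ne _ h0, zero_mul]

lemma commB (M n L : ℕ) (i j : Fin n) (ξ u : ℂ) (L₁ L₂ : ℕ)
    (hij : Kdiag n ξ L₁ L₂ u i i = Kdiag n ξ L₁ L₂ u j j) :
    Commute (Delta M n (L + 1) i j) ((onAux (Kdiag n ξ L₁ L₂ u) : Ten n (L + 1))) := by
  have hij' : kdval ξ L₁ L₂ ((i : ℕ) + 1) u = kdval ξ L₁ L₂ ((j : ℕ) + 1) u := by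
    simpa [Kdiag, Matrix.diagonal_apply_eq] using hij
  show _ * _ = _ * _
  rw [onAux_diag]
  ext f g
  rw [Matrix.mul_diagonal, Matrix.diagonal_mul, Delta_eq, Matrix.sum_apply,
    Finset.sum_mul, Finset.mul_sum]
  refine Finset.sum_congr rfl fun k _ => ?_
  simp only [Eterm, Matrix.of_apply]
  split_ifs with h
  · obtain ⟨h1, h2, h3⟩ := h
    have hd : kdval ξ L₁ L₂ ((g 0 : ℕ) + 1) u = kdval ξ L₁ L₂ ((f 0 : ℕ) + 1) u := by
      rcases eq_or_ne k 0 with rfl | hk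
      · rw [h1, h2]; exact hij'.symm
      · rw [h3 0 (Ne.symm hk)]
    rw [hd, mul_comm]
  · simp

lemma SL_cons (M n L : ℕ) (a : Fin n) (f : Fin L → Fin n) (k : Fin L) :
    ∑ l ∈ Finset.univ.filter (fun l => l < Fin.succ k), gr M ((Fin.cons a f : Fin (L + 1) → Fin n) l)
      = gr M a + ∑ l ∈ Finset.univ.filter (fun l => l < k), gr M (f l) := by
  rw [Finset.sum_filter, Finset.sum_filter, Fin.sum_univ_succ]
  simp [Fin.cons_succ, Fin.succ_lt_succ_iff, Fin.succ_pos]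

lemma blkD_left (M n L : ℕ) (i j : Fin n) (X : Ten n (L + 1)) (a a' : Fin n)
    (f g : Fin L → Fin n) :
    (Delta M n (L + 1) i j * X) (Fin.cons a f) (Fin.cons a' g)
      = (if a = i then X (Fin.cons j f) (Fin.cons a' g) else 0)
        + ((-1 : ℂ) ^ ((gr M i + gr M j) * gr M a)) *
            ((Delta M n L i j * blk X a a') f g) := by
  rw [Delta_eq, Delta_eq, Finset.sum_mul, Finset.sum_mul, Matrix.sum_apply, Matrix.sum_apply,
    Fin.sum_univ_succ]
  simp only [Eterm_mul_apply]
  congr 1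
  · have h0 : ∑ l ∈ Finset.univ.filter (fun l => l < (0 : Fin (L + 1))), gr M ((Fin.cons a f : Fin (L + 1) → Fin n) l)
        = 0 := by simp
    simp only [Fin.cons_zero, h0, Nat.mul_zero, pow_zero, one_mul, Fin.update_cons_zero]
  · rw [Finset.mul_sum]
    refine Finset.sum_congr rfl fun k _ => ?_
    simp only [Fin.cons_succ]
    rw [SL_cons]
    by_cases hk : f k = i
    · rw [if_pos hk, if_pos hk, update_cons_succ a j f k]
      simp only [blk, Matrix.of_apply]
      rw [Nat.mul_add, pow_add]
      ring
    · rw [if_neg hk, if_neg hk, mul_zero]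

lemma blkD_right (M n L : ℕ) (i j : Fin n) (X : Ten n (L + 1)) (a a' : Fin n)
    (f g : Fin L → Fin n) :
    (X * Delta M n (L + 1) i j) (Fin.cons a f) (Fin.cons a' g)
      = (if a' = j then X (Fin.cons a f) (Fin.cons i g) else 0)
        + ((-1 : ℂ) ^ ((gr M i + gr M j) * gr M a')) *
            ((blk X a a' * Delta M n L i j) f g) := by
  rw [Delta_eq, Delta_eq, Finset.mul_sum, Finset.mul_sum, Matrix.sum_apply, Matrix.sum_apply,
    Fin.sum_univ_succ]
  simp only [mul_Eterm_apply]
  congr 1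
  · have h0 : ∑ l ∈ Finset.univ.filter (fun l => l < (0 : Fin (L + 1))), gr M ((Fin.cons a' g : Fin (L + 1) → Fin n) l)
        = 0 := by simp
    simp only [Fin.cons_zero, h0, Nat.mul_zero, pow_zero, mul_one, Fin.update_cons_zero]
  · rw [Finset.mul_sum]
    refine Finset.sum_congr rfl fun k _ => ?_
    simp only [Fin.cons_succ]
    rw [SL_cons]
    by_cases hk : g k = j
    · rw [if_pos hk, if_pos hk, update_cons_succ a' i g k]
      simp only [blk, Matrix.of_apply]
      rw [Nat.mul_add, pow_add]
      ring
    · rw [if_neg hk, if_neg hk, mul_zero]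
lemma blockD (M n L : ℕ) (i j : Fin n) (X : Ten n (L + 1)) (κ : Fin n → ℂ)
    (hκ : κ i = κ j)
    (HX : Delta M n (L + 1) i j * X = X * Delta M n (L + 1) i j) :
    Delta M n L i j * (∑ b : Fin n, (((-1 : ℂ) ^ gr M b) * κ b) • blk X b b)
      = (∑ b : Fin n, (((-1 : ℂ) ^ gr M b) * κ b) • blk X b b) * Delta M n L i j := by
  have hb : ∀ b : Fin n,
      Delta M n L i j * blk X b b - blk X b b * Delta M n L i j
        = ((-1 : ℂ) ^ ((gr M i + gr M j) * gr M b)) •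
            ((if b = j then blk X b i else 0) - (if b = i then blk X j b else 0)) := by
    intro b
    have σ2 : ((-1 : ℂ) ^ ((gr M i + gr M j) * gr M b)) *
        ((-1 : ℂ) ^ ((gr M i + gr M j) * gr M b)) = 1 := by
      rw [← pow_add]; exact Even.neg_one_pow ⟨_, rfl⟩
    ext f g
    have h1 := blkD_left M n L i j X b b f g
    have h2 := blkD_right M n L i j X b b f g
    have h0 : (Delta M n (L + 1) i j * X) (Fin.cons b f) (Fin.cons b g)
        = (X * Delta M n (L + 1) i j) (Fin.cons b f) (Fin.cons b g) := by rw [HX]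
    rw [h1, h2] at h0
    simp only [Matrix.sub_apply, Matrix.smul_apply, smul_eq_mul]
    have e1 : ((if b = j then blk X b i else 0 : Ten n L)) f g
        = (if b = j then X (Fin.cons b f) (Fin.cons i g) else 0) := by
      split_ifs <;> simp [blk]
    have e2 : ((if b = i then blk X j b else 0 : Ten n L)) f g
        = (if b = i then X (Fin.cons j f) (Fin.cons b g) else 0) := by
      split_ifs <;> simp [blk]
    rw [e1, e2]
    linear_combination ((-1 : ℂ) ^ ((gr M i + gr M j) * gr M b)) * h0 -
      ((Delta M n L i j * blk X b b) f g - (blk X b b * Delta M n L i j) f g) * σ2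
  rw [Finset.mul_sum, Finset.sum_mul, ← sub_eq_zero, ← Finset.sum_sub_distrib]
  have hbody : ∀ b ∈ (Finset.univ : Finset (Fin n)),
      Delta M n L i j * ((((-1 : ℂ) ^ gr M b) * κ b) • blk X b b)
        - ((((-1 : ℂ) ^ gr M b) * κ b) • blk X b b) * Delta M n L i j
      = (if b = j then ((((-1 : ℂ) ^ gr M b) * κ b) *
            ((-1 : ℂ) ^ ((gr M i + gr M j) * gr M b))) • blk X b i else 0)
        - (if b = i then ((((-1 : ℂ) ^ gr M b) * κ b) *
            ((-1 : ℂ) ^ ((gr M i + gr M j) * gr M b))) • blk X j b else 0) := by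
    intro b _
    rw [Matrix.mul_smul, Matrix.smul_mul, ← smul_sub, hb b, smul_smul, smul_sub]
    congr 1
    · split_ifs <;> simp
    · split_ifs <;> simp
  rw [Finset.sum_congr rfl hbody, Finset.sum_sub_distrib,
    Finset.sum_ite_eq' Finset.univ j
      (fun b => ((((-1 : ℂ) ^ gr M b) * κ b) * ((-1 : ℂ) ^ ((gr M i + gr M j) * gr M b))) • blk X b i),
    Finset.sum_ite_eq' Finset.univ i
      (fun b => ((((-1 : ℂ) ^ gr M b) * κ b) * ((-1 : ℂ) ^ ((gr M i + gr M j) * gr M b))) • blk X j b)]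
  simp only [Finset.mem_univ, if_true]
  have hs : (((-1 : ℂ) ^ gr M j) * κ j) * ((-1 : ℂ) ^ ((gr M i + gr M j) * gr M j))
      = (((-1 : ℂ) ^ gr M i) * κ i) * ((-1 : ℂ) ^ ((gr M i + gr M j) * gr M i)) := by
    rw [hκ]
    have hp := npw (gr M j + (gr M i + gr M j) * gr M j) (gr M i + (gr M i + gr M j) * gr M i)
      (by rcases gr_cases M i with h1 | h1 <;> rcases gr_cases M j with h2 | h2 <;>
        simp only [h1, h2] <;> omega)
    linear_combination κ j * hp
  rw [hs, sub_self]

lemma comm_inv {m : Type*} [Fintype m] [DecidableEq m] (D A : Matrix m m ℂ)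
    (h : Commute D A) : Commute D A⁻¹ := by
  by_cases hdet : IsUnit A.det
  · show D * A⁻¹ = A⁻¹ * D
    calc D * A⁻¹ = A⁻¹ * (A * (D * A⁻¹)) := (Matrix.nonsing_inv_mul_cancel_left _ _ hdet).symm
    _ = A⁻¹ * (D * A * A⁻¹) := by rw [← Matrix.mul_assoc A D A⁻¹, ← h.eq]
    _ = A⁻¹ * (D * (A * A⁻¹)) := by rw [Matrix.mul_assoc]
    _ = A⁻¹ * D := by rw [Matrix.mul_nonsing_inv _ hdet, Matrix.mul_one]
  · rw [Matrix.nonsing_inv_apply_not_isUnit _ hdet]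
    exact Commute.zero_right D
/-- If `i, j` lie in the same block of `K` and in the same block
of `K⁺` (i.e. `K_{ii} = K_{jj}` and `K⁺_{ii} = K⁺_{jj}` as functions of `u`),
then the global generator `Δ(E_{ij})` commutes with the open transfer matrix. -/
theorem statement17 (M N : ℕ) (hM : 1 ≤ M) (hN : 1 ≤ N) (hb : ℂ) (hhb : hb ≠ 0)
    (L : ℕ) (hL : 1 ≤ L) (sh : Fin L → ℂ)
    (ξ : ℂ) (L₁ L₂ : ℕ) (h12 : L₁ ≤ L₂) (h2n : L₂ ≤ M + N)
    (ξ' : ℂ) (L₁' L₂' : ℕ) (h12' : L₁' ≤ L₂') (h2n' : L₂' ≤ M + N)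
    (i j : Fin (M + N))
    (hKij : ∀ u : ℂ, Kdiag (M + N) ξ L₁ L₂ u i i = Kdiag (M + N) ξ L₁ L₂ u j j)
    (hKpij : ∀ u : ℂ, Kdiag (M + N) ξ' L₁' L₂' u i i = Kdiag (M + N) ξ' L₁' L₂' u j j) :
    ∀ u : ℂ, (∀ m : Fin L, (u + sh m) ^ 2 ≠ hb ^ 2) →
      Delta M (M + N) L i j * bop M (M + N) L hb sh ξ L₁ L₂ ξ' L₁' L₂' u
        = bop M (M + N) L hb sh ξ L₁ L₂ ξ' L₁' L₂' u * Delta M (M + N) L i j := by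
  intro u _
  have h1 := commT M (M + N) L i j hb sh u
  have h2 := commB M (M + N) L i j ξ u L₁ L₂ (hKij u)
  have h3 : Commute (Delta M (M + N) (L + 1) i j) ((Tmono M (M + N) L hb sh (-u))⁻¹) :=
    comm_inv _ _ (commT M (M + N) L i j hb sh (-u))
  have hD : Delta M (M + N) (L + 1) i j * Bmono M (M + N) L hb sh ξ L₁ L₂ u
      = Bmono M (M + N) L hb sh ξ L₁ L₂ u * Delta M (M + N) (L + 1) i j := by
    unfold Bmono
    exact ((h1.mul_right h2).mul_right h3).eq
  unfold bop
  exact blockD M (M + N) L i j (Bmono M (M + N) L hb sh ξ L₁ L₂ u)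
    (fun b => Kdiag (M + N) ξ' L₁' L₂' u b b) (hKpij u) hD

end SuperSpin
end
end
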